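/- arXiv:2602.16055 — 2 statements merged into one kernel-verified Lean document; each statement's English description precedes it below -/
import Mathlib

section
/- Let A be the 2×2 coloring matrix with first row (1,1) and second row (1,0) (no two vertices of color 2 may be adjacent as parent and child). Then for all n ≥ 1, the number of A-colored plane trees on n vertices equals (2/n)·binom(3n-3, n-1). -/
inductive CTree (α : Type) : Type
  | node : α → List (CTree α) → CTree α

namespace CTree

def color {α : Type} : CTree α → α
  | node c _ => c

def children {α : Type} : CTree α → List (CTree α)
  | node _ ts => ts

def size {α : Type} : CTree α → ℕ
  | node _ ts => 1 + (ts.attach.map fun t => size t.1).sum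
decreasing_by
  have := List.sizeOf_lt_of_mem t.2
  simp only [CTree.node.sizeOf_spec]
  omega

def Valid {α : Type} (A : Matrix α α ℕ) : CTree α → Prop
  | node c ts => ∀ t ∈ ts, A c t.color = 1 ∧ Valid A t

end CTree

/-- Number of `A`-colored plane trees with `n` vertices and root color `i`. -/
noncomputable def colorCount {m : ℕ} (A : Matrix (Fin m) (Fin m) ℕ) (i : Fin m) (n : ℕ) : ℕ :=
  {t : CTree (Fin m) | t.Valid A ∧ t.size = n ∧ t.color = i}.ncard

/-- Total number of `A`-colored plane trees with `n` vertices. -/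
noncomputable def totalCount {α : Type} (A : Matrix α α ℕ) (n : ℕ) : ℕ :=
  {t : CTree α | t.Valid A ∧ t.size = n}.ncard

/-!
Split the admissible trees by root colour. A tree with root colour 1 is a root over an arbitrary
forest, one with root colour 2 is a root over a forest whose roots all have colour 1. With `T`, `A`
the generating functions of all trees and of those with root colour 1, this gives
`A (1 - T) = X` and `(T - A) (1 - A) = X`, and eliminating `A` yields the cubic
`T (1 - T)² = X (2 - X - 2T)`. Differentiating the cubic twice and eliminating the nonlinear terms
gives the linear equation `(4X - 27X²) T'' - 2T' - 6T + 4 = 0`, i.e. the hypergeometric recurrence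
`2(n+1)(2n-1) tₙ₊₁ = 3(3n-1)(3n-2) tₙ` with `t₁ = 2`, which `(2/n)·C(3n-3, n-1)` also satisfies.
-/

open PowerSeries Finset

section WeightedCounting

variable {β : Type*} (w : β → ℕ)

def listWeight (l : List β) : ℕ := (l.map w).sum

def listsIn (s : Set β) : Set (List β) := {l | ∀ x ∈ l, x ∈ s}

noncomputable def weightGF (s : Set β) : ℚ⟦X⟧ :=
  PowerSeries.mk fun n => ({b ∈ s | w b = n}.ncard : ℚ)

variable {w}

theorem listsIn_listWeight_succ_eq_biUnion (s : Set β) (n : ℕ) :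
    {l ∈ listsIn s | listWeight w l = n + 1} =
      ⋃ p ∈ antidiagonal (n + 1), (fun q : β × List β => q.1 :: q.2) ''
        ({b ∈ s | w b = p.1} ×ˢ {l ∈ listsIn s | listWeight w l = p.2}) := by
  ext l
  cases l with
  | nil => simp [listWeight]
  | cons b l => simp [listsIn, listWeight, and_assoc, and_left_comm, and_comm]

theorem finite_listsIn_listWeight (hw : ∀ b, 0 < w b) {s : Set β} {n : ℕ}
    (hs : ∀ k ≤ n, {b ∈ s | w b = k}.Finite) : {l ∈ listsIn s | listWeight w l = n}.Finite := by
  induction n using Nat.strong_induction_on with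
  | _ n ih =>
  cases n with
  | zero =>
    refine (Set.finite_singleton []).subset fun l hl => ?_
    cases l with
    | nil => rfl
    | cons b l => have := hw b; simp [listWeight] at hl; omega
  | succ n =>
    rw [listsIn_listWeight_succ_eq_biUnion]
    refine (finite_toSet _).biUnion fun p hp => Set.Finite.image _ ?_
    rw [Finset.mem_coe, Finset.HasAntidiagonal.mem_antidiagonal] at hp
    rcases Nat.eq_zero_or_pos p.1 with h | h
    · convert Set.finite_empty
      exact Set.eq_empty_of_forall_notMem fun q hq => (hw q.1).ne' (hq.1.2.trans h)
    · exact (hs p.1 (by omega)).prod (ih p.2 (by omega) fun k hk => hs k (by omega))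

theorem weightGF_listsIn (hw : ∀ b, 0 < w b) (hfin : ∀ n, {b | w b = n}.Finite) (s : Set β) :
    weightGF (listWeight w) (listsIn s)
      = 1 + weightGF w s * weightGF (listWeight w) (listsIn s) := by
  have hs : ∀ n, {b ∈ s | w b = n}.Finite := fun n => (hfin n).subset fun _ hb => hb.2
  have hL : ∀ n, {l ∈ listsIn s | listWeight w l = n}.Finite := fun n =>
    finite_listsIn_listWeight hw fun k _ => hs k
  ext n
  cases n with
  | zero =>
    have hempty : {b ∈ s | w b = 0} = ∅ :=
      Set.eq_empty_of_forall_notMem fun b hb => (hw b).ne' hb.2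
    have hnil : {l ∈ listsIn s | listWeight w l = 0} = {[]} := by
      ext l
      cases l with
      | nil => simp [listsIn, listWeight]
      | cons b l => have := hw b; simp [listWeight]; omega
    simp [weightGF, hempty, hnil]
  | succ n =>
    rw [map_add, coeff_mul, coeff_one, if_neg n.add_one_ne_zero, zero_add]
    simp only [weightGF, coeff_mk]
    rw [listsIn_listWeight_succ_eq_biUnion, ← Finset.set_biUnion_coe,
      (finite_toSet _).ncard_biUnion, finsum_mem_coe_finset]
    · push_cast
      refine Finset.sum_congr rfl fun p _ => ?_
      rw [Set.ncard_image_of_injective _ fun _ _ h => Prod.ext_iff.2 (List.cons_eq_cons.1 h),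
        Set.ncard_prod, Nat.cast_mul]
    · exact fun p _ => ((hs p.1).prod (hL p.2)).image _
    · intro p hp p' hp' hne
      refine Set.disjoint_left.2 ?_
      rintro _ ⟨⟨b, l⟩, ⟨⟨-, hb⟩, -⟩, rfl⟩ ⟨⟨b', l'⟩, ⟨⟨-, hb'⟩, -⟩, heq⟩
      obtain ⟨rfl, rfl⟩ := List.cons_eq_cons.1 heq
      simp only [Finset.mem_coe, Finset.HasAntidiagonal.mem_antidiagonal] at hp hp'
      dsimp only at hb hb'
      exact hne (Prod.ext (by omega) (by omega))

theorem weightGF_union (hfin : ∀ n, {b | w b = n}.Finite) {s t : Set β} (hst : Disjoint s t) :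
    weightGF w (s ∪ t) = weightGF w s + weightGF w t := by
  ext n
  simp only [weightGF, coeff_mk, map_add, Set.mem_union, Set.sep_union]
  rw [Set.ncard_union_eq (hst.mono (fun _ hb => hb.1) (fun _ hb => hb.1))
    ((hfin n).subset fun _ hb => hb.2) ((hfin n).subset fun _ hb => hb.2), Nat.cast_add]

theorem weightGF_image {γ : Type*} {g : γ → β} (hg : Function.Injective g) {v : γ → ℕ}
    (hv : ∀ c, w (g c) = v c + 1) (s : Set γ) : weightGF w (g '' s) = X * weightGF v s := by
  ext n
  cases n with
  | zero =>
    have hempty : {b ∈ g '' s | w b = 0} = ∅ := by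
      refine Set.eq_empty_of_forall_notMem ?_
      rintro _ ⟨⟨c, -, rfl⟩, hc⟩
      simp [hv] at hc
    simp only [weightGF, coeff_mk, coeff_zero_X_mul, hempty, Set.ncard_empty, Nat.cast_zero]
  | succ n =>
    have himage : {b ∈ g '' s | w b = n + 1} = g '' {c ∈ s | v c = n} := by
      ext b
      constructor
      · rintro ⟨⟨c, hc, rfl⟩, hw⟩
        exact ⟨c, ⟨hc, by rw [hv] at hw; omega⟩, rfl⟩
      · rintro ⟨c, ⟨hc, rfl⟩, rfl⟩
        exact ⟨⟨c, hc, rfl⟩, hv c⟩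
    simp only [weightGF, coeff_mk, coeff_succ_X_mul, himage, Set.ncard_image_of_injective _ hg]

end WeightedCounting

namespace CTree

variable {α : Type}

theorem size_node (c : α) (ts : List (CTree α)) : (node c ts).size = listWeight size ts + 1 := by
  rw [size, List.attach_map_val, listWeight, add_comm]

theorem size_pos (t : CTree α) : 0 < t.size := by
  cases t with
  | node c ts => rw [size_node]; omega

theorem node_injective (c : α) : Function.Injective (node c) := fun _ _ h => node.inj h |>.2

theorem finite_size_eq [Finite α] (n : ℕ) : {t : CTree α | t.size = n}.Finite := by
  induction n using Nat.strong_induction_on with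
  | _ n ih =>
  cases n with
  | zero =>
    convert Set.finite_empty
    exact Set.eq_empty_of_forall_notMem fun t ht => (size_pos t).ne' ht
  | succ n =>
    have hlists : {l ∈ listsIn Set.univ | listWeight size l = n}.Finite :=
      finite_listsIn_listWeight size_pos fun k hk => by simpa using ih k (by omega)
    refine ((Set.finite_univ (α := α)).prod hlists |>.image fun p => node p.1 p.2).subset ?_
    rintro ⟨c, ts⟩ ht
    have hts : listWeight size ts + 1 = n + 1 := by rw [← size_node]; exact ht
    exact ⟨(c, ts), ⟨trivial, fun _ _ => trivial, Nat.succ_injective hts⟩, rfl⟩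

theorem valid_color_eq_image (A : Matrix α α ℕ) (c : α) :
    {t : CTree α | t.Valid A ∧ t.color = c} =
      node c '' listsIn {t | A c t.color = 1 ∧ t.Valid A} := by
  ext ⟨c', ts⟩
  simp only [Set.mem_ofPred_eq, Set.mem_image, listsIn, Valid, color]
  constructor
  · rintro ⟨hts, rfl⟩
    exact ⟨ts, hts, rfl⟩
  · rintro ⟨ts, hts, h⟩
    obtain ⟨rfl, rfl⟩ := node.inj h
    exact ⟨hts, rfl⟩

end CTree

theorem coeff_X_mul_derivative {R : Type*} [CommSemiring R] (f : R⟦X⟧) (n : ℕ) :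
    coeff n (X * d⁄dX R f) = n * coeff n f := by
  cases n with
  | zero => simp
  | succ n => rw [coeff_succ_X_mul, coeff_derivative, mul_comm, Nat.cast_succ]

theorem coeff_X_sq_mul_derivative_derivative {R : Type*} [CommRing R] (f : R⟦X⟧) (n : ℕ) :
    coeff n (X ^ 2 * d⁄dX R (d⁄dX R f)) = n * (n - 1) * coeff n f := by
  have h : X ^ 2 * d⁄dX R (d⁄dX R f) = X * d⁄dX R (X * d⁄dX R f) - X * d⁄dX R f := by
    simp only [Derivation.leibniz, derivative_X, smul_eq_mul]
    ring
  rw [h, map_sub, coeff_X_mul_derivative, coeff_X_mul_derivative]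
  ring

section Cubic

variable {T : ℚ⟦X⟧}

theorem derivative_eq_of_cubic (h : T * (1 - T) ^ 2 = X * (2 - X - 2 * T)) :
    ((1 - T) * (1 - 3 * T) + 2 * X) * d⁄dX ℚ T = 2 - 2 * T - 2 * X := by
  have h' := congrArg (d⁄dX ℚ) h
  have two : d⁄dX ℚ (2 : ℚ⟦X⟧) = 0 := by exact_mod_cast (d⁄dX ℚ).map_natCast 2
  simp only [Derivation.leibniz, Derivation.leibniz_pow, map_sub, derivative_X, derivative_one,
    two, smul_eq_mul, nsmul_eq_mul] at h'
  linear_combination h'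

theorem derivative_derivative_eq_of_cubic (h : T * (1 - T) ^ 2 = X * (2 - X - 2 * T)) :
    ((1 - T) * (1 - 3 * T) + 2 * X) * d⁄dX ℚ (d⁄dX ℚ T) + (6 * T - 4) * (d⁄dX ℚ T) ^ 2
      + 4 * d⁄dX ℚ T + 2 = 0 := by
  have h' := congrArg (d⁄dX ℚ) (derivative_eq_of_cubic h)
  have two : d⁄dX ℚ (2 : ℚ⟦X⟧) = 0 := by exact_mod_cast (d⁄dX ℚ).map_natCast 2
  have three : d⁄dX ℚ (3 : ℚ⟦X⟧) = 0 := by exact_mod_cast (d⁄dX ℚ).map_natCast 3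
  simp only [Derivation.leibniz, map_add, map_sub, derivative_X, derivative_one,
    two, three, smul_eq_mul] at h'
  linear_combination h'

theorem ode_of_cubic (h0 : constantCoeff T = 0) (h : T * (1 - T) ^ 2 = X * (2 - X - 2 * T)) :
    (4 * X - 27 * X ^ 2) * d⁄dX ℚ (d⁄dX ℚ T) - 2 * d⁄dX ℚ T - 6 * T + 4 = 0 := by
  set D : ℚ⟦X⟧ := (1 - T) * (1 - 3 * T) + 2 * X with hD
  have hD0 : D ≠ 0 := by
    intro hD0
    have := congrArg constantCoeff hD0
    simp [hD, h0] at this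
  have h1 := derivative_eq_of_cubic h
  have h2 := derivative_derivative_eq_of_cubic h
  have key :
      D ^ 3 * ((4 * X - 27 * X ^ 2) * d⁄dX ℚ (d⁄dX ℚ T) - 2 * d⁄dX ℚ T - 6 * T + 4) = 0 := by
    -- `D` is the `T`-derivative of the cubic; these multipliers come from a Gröbner basis
    -- computation in `ℚ[X, T, T', T'']`.
    linear_combination
      (-72 * (1 - T) ^ 2 + 216 * (1 - T) ^ 3 - 162 * (1 - T) ^ 4 + 144 * X * (1 - T)
        - 648 * X ^ 2 * (1 - T)) * h
      + (-4 * (4 * X - 27 * X ^ 2) * D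
        - (4 * X - 27 * X ^ 2) * (4 - 6 * T) * (2 * X - 2 * (1 - T) - D * d⁄dX ℚ T)
        - 2 * D ^ 2) * h1
      + (4 * X - 27 * X ^ 2) * D ^ 2 * h2
  exact (mul_eq_zero.mp key).resolve_left (pow_ne_zero 3 hD0)

theorem coeff_succ_of_ode
    (hode : (4 * X - 27 * X ^ 2) * d⁄dX ℚ (d⁄dX ℚ T) - 2 * d⁄dX ℚ T - 6 * T + 4 = 0) (n : ℕ) :
    2 * (n + 1) * (2 * n - 1) * coeff (n + 1) T + 4 * coeff n (1 : ℚ⟦X⟧)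
      = 3 * (3 * n - 1) * (3 * n - 2) * coeff n T := by
  have h := congrArg (coeff n) hode
  rw [sub_mul, mul_assoc, mul_assoc] at h
  simp only [← map_ofNat (C (R := ℚ)), map_add, map_sub, coeff_C_mul, coeff_X_mul_derivative,
    coeff_X_sq_mul_derivative_derivative, coeff_derivative, coeff_C, map_zero] at h
  rw [coeff_one]
  split_ifs at h ⊢ <;> linear_combination h

theorem choose_three_mul_succ (n : ℕ) :
    2 * ((n : ℚ) + 1) * (2 * n + 1) * (3 * n + 3).choose (n + 1)
      = 3 * (3 * (n : ℚ) + 1) * (3 * n + 2) * (3 * n).choose n := by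
  have h1 := Nat.add_one_mul_choose_eq (3 * n + 2) n
  have h2 := Nat.choose_mul_succ_eq (3 * n + 1) n
  have h3 := Nat.choose_mul_succ_eq (3 * n) n
  rw [show 3 * n + 1 + 1 - n = 2 * n + 2 by omega] at h2
  rw [show 3 * n + 1 - n = 2 * n + 1 by omega] at h3
  rw [show 3 * n + 2 + 1 = 3 * n + 3 by omega] at h1
  qify at h1 h2 h3
  linear_combination
    (-2 * (2 * n + 1) : ℚ) * h1 - 3 * (2 * (n : ℚ) + 1) * h2 - 3 * (3 * (n : ℚ) + 2) * h3

theorem succ_mul_coeff_succ_of_ode (h0 : constantCoeff T = 0)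
    (hode : (4 * X - 27 * X ^ 2) * d⁄dX ℚ (d⁄dX ℚ T) - 2 * d⁄dX ℚ T - 6 * T + 4 = 0) (k : ℕ) :
    (k + 1) * coeff (k + 1) T = 2 * (3 * k).choose k := by
  induction k with
  | zero =>
    have h := coeff_succ_of_ode hode 0
    simp only [coeff_zero_eq_constantCoeff_apply, h0, coeff_one, if_true] at h
    push_cast at h ⊢
    rw [Nat.choose_self]
    linear_combination -h / 2
  | succ k ih =>
    have hrec := coeff_succ_of_ode hode (k + 1)
    have hbin := choose_three_mul_succ k
    simp only [coeff_one, Nat.add_one_ne_zero, if_false] at hrec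
    push_cast at hrec ih ⊢
    have hpos : (2 * ((k : ℚ) + 1) * (2 * k + 1)) ≠ 0 := by positivity
    refine mul_left_cancel₀ hpos ?_
    rw [show 3 * (k + 1) = 3 * k + 3 by ring]
    linear_combination (k + 1) * hrec + 3 * (3 * (k : ℚ) + 1) * (3 * k + 2) * ih - 2 * hbin

end Cubic

theorem cubic_of_system {R : Type*} [CommRing R] {T A x : R} (hA : A * (1 - T) = x)
    (hB : (T - A) * (1 - A) = x) : T * (1 - T) ^ 2 = x * (2 - x - 2 * T) := by
  linear_combination (1 - x - A + A * T - T ^ 2) * hA + (1 + T ^ 2 - 2 * T) * hB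

section NoAdjacentTwos

open CTree

-- Index `0` is colour 1 and index `1` is colour 2 of the informal statement.
local notation "M" => (!![1, 1; 1, 0] : Matrix (Fin 2) (Fin 2) ℕ)

theorem valid_color_zero_eq_image :
    {t : CTree (Fin 2) | t.Valid M ∧ t.color = 0} = node 0 '' listsIn {t | t.Valid M} := by
  rw [valid_color_eq_image]
  congr! 2
  ext t
  rcases (by decide : ∀ j : Fin 2, j = 0 ∨ j = 1) t.color with h | h <;> simp [h]

theorem valid_color_one_eq_image :
    {t : CTree (Fin 2) | t.Valid M ∧ t.color = 1} =
      node 1 '' listsIn {t | t.Valid M ∧ t.color = 0} := by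
  rw [valid_color_eq_image]
  congr! 2
  ext t
  rcases (by decide : ∀ j : Fin 2, j = 0 ∨ j = 1) t.color with h | h <;> simp [h]

theorem valid_eq_union_color :
    {t : CTree (Fin 2) | t.Valid M} =
      {t | t.Valid M ∧ t.color = 0} ∪ {t | t.Valid M ∧ t.color = 1} := by
  ext t
  rcases (by decide : ∀ j : Fin 2, j = 0 ∨ j = 1) t.color with h | h <;> simp [h]

noncomputable def validGF : ℚ⟦X⟧ := weightGF size {t : CTree (Fin 2) | t.Valid M}

theorem coeff_validGF (n : ℕ) : coeff n validGF = totalCount M n := by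
  rw [validGF, weightGF, coeff_mk]
  rfl

theorem constantCoeff_validGF : constantCoeff validGF = 0 := by
  have hempty : {t : CTree (Fin 2) | t.Valid M ∧ t.size = 0} = ∅ :=
    Set.eq_empty_of_forall_notMem fun t ht => (size_pos t).ne' ht.2
  rw [← coeff_zero_eq_constantCoeff_apply, coeff_validGF, totalCount, hempty, Set.ncard_empty,
    Nat.cast_zero]

theorem validGF_cubic : validGF * (1 - validGF) ^ 2 = X * (2 - X - 2 * validGF) := by
  have hfin : ∀ n, {t : CTree (Fin 2) | t.size = n}.Finite := finite_size_eq
  have hA : weightGF size {t | t.Valid M ∧ t.color = 0} * (1 - validGF) = X := by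
    rw [valid_color_zero_eq_image, weightGF_image (node_injective 0) (size_node 0), validGF]
    linear_combination X * weightGF_listsIn size_pos hfin {t | t.Valid M}
  have hB : (validGF - weightGF size {t | t.Valid M ∧ t.color = 0})
      * (1 - weightGF size {t | t.Valid M ∧ t.color = 0}) = X := by
    have hdisj :
        Disjoint {t : CTree (Fin 2) | t.Valid M ∧ t.color = 0} {t | t.Valid M ∧ t.color = 1} :=
      Set.disjoint_left.2 fun _ h0 h1 => absurd (h0.2.symm.trans h1.2) (by decide)
    rw [validGF, valid_eq_union_color, weightGF_union hfin hdisj, add_sub_cancel_left,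
      valid_color_one_eq_image, weightGF_image (node_injective 1) (size_node 1)]
    linear_combination X * weightGF_listsIn size_pos hfin {t | t.Valid M ∧ t.color = 0}
  exact cubic_of_system hA hB

end NoAdjacentTwos

/-- For the matrix `[[1,1],[1,0]]` (no two color-2 vertices adjacent), the number of
colored plane trees on `n` vertices is `(2/n)·C(3n-3, n-1)`. -/
theorem stmt8 (n : ℕ) (hn : 1 ≤ n) :
    n * totalCount (!![1, 1; 1, 0] : Matrix (Fin 2) (Fin 2) ℕ) n =
      2 * (3 * n - 3).choose (n - 1) := by
  obtain ⟨k, rfl⟩ : ∃ k, n = k + 1 := ⟨n - 1, by omega⟩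
  rw [show 3 * (k + 1) - 3 = 3 * k by omega, Nat.add_sub_cancel]
  have h := succ_mul_coeff_succ_of_ode constantCoeff_validGF
    (ode_of_cubic constantCoeff_validGF validGF_cubic) k
  rw [coeff_validGF] at h
  exact_mod_cast h
end

section
/- For every nonnegative integer n and every real number x, Σ_{k=0}^{n} binom(2n-k, n-k) · (-2)^k · binom(x, k) = 4^n · binom(n - (x+1)/2, n), where binom(y, k) = y(y-1)···(y-k+1)/k! denotes the generalized binomial coefficient. -/
/-- The generalized binomial coefficient `x(x-1)⋯(x-k+1)/k!` for real `x`. -/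
noncomputable def rchoose (x : ℝ) (k : ℕ) : ℝ :=
  (∏ i ∈ Finset.range k, (x - i)) / (k.factorial : ℝ)

/-!
Both sides satisfy the recurrence `(n + 1) a (n + 1) = (4n + 2 - 2x) a n` with `a 0 = 1`.
For the right side this is the shift `binom(y + 1, n + 1) = (y + 1) / (n + 1) · binom(y, n)`.
For the left side it comes from creative telescoping (Zeilberger's algorithm): the summand
`F n k` satisfies `(n + 1) F (n + 1) k - (4n + 2 - 2x) F n k = G n (k + 1) - G n k` for the
certificate `G n k = -k · C(2n + 1 - k, n + 1 - k) (-2)^k binom(x, k)`, and the sum over `k`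
telescopes to the boundary terms, which cancel the new top term `F (n + 1) (n + 1)`.
-/

open Finset

lemma rchoose_zero (x : ℝ) : rchoose x 0 = 1 := by
  simp [rchoose]

lemma rchoose_succ (x : ℝ) (k : ℕ) :
    rchoose x (k + 1) = rchoose x k * (x - k) / (k + 1) := by
  simp only [rchoose, prod_range_succ, Nat.factorial_succ]
  push_cast
  field_simp

lemma succ_mul_rchoose_add_one_succ (y : ℝ) (n : ℕ) :
    (n + 1) * rchoose (y + 1) (n + 1) = (y + 1) * rchoose y n := by
  simp only [rchoose, prod_range_succ', Nat.factorial_succ]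
  push_cast
  field_simp
  simp only [add_sub_add_right_eq_sub, sub_zero]
  ring

lemma choose_add_two_mul_recurrence (k m : ℕ) :
    ((k : ℝ) + m + 1) * ((k + 2 * m + 2).choose (m + 1) : ℝ) + 2 * k * ((k + 2 * m).choose m : ℝ) =
      (4 * ((k : ℝ) + m) + 2) * ((k + 2 * m).choose m : ℝ) +
        k * ((k + 2 * m + 1).choose (m + 1) : ℝ) := by
  rw [Nat.cast_choose ℝ (show m + 1 ≤ k + 2 * m + 2 by omega),
    Nat.cast_choose ℝ (show m ≤ k + 2 * m by omega),
    Nat.cast_choose ℝ (show m + 1 ≤ k + 2 * m + 1 by omega),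
    show k + 2 * m + 2 - (m + 1) = k + m + 1 by omega, show k + 2 * m - m = k + m by omega,
    show k + 2 * m + 1 - (m + 1) = k + m by omega]
  simp only [Nat.factorial_succ, show k + 2 * m + 2 = k + 2 * m + 1 + 1 by omega]
  push_cast
  field_simp
  ring

lemma eq_of_succ_mul_eq {a b c : ℕ → ℝ} (h0 : a 0 = b 0)
    (ha : ∀ n, (n + 1) * a (n + 1) = c n * a n) (hb : ∀ n, (n + 1) * b (n + 1) = c n * b n) :
    a = b := by
  funext n
  induction n with
  | zero => exact h0
  | succ n ih =>
    apply mul_left_cancel₀ (n.cast_add_one_ne_zero (R := ℝ))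
    rw [ha, hb, ih]

namespace CentralChooseSum

variable (x : ℝ)

noncomputable def term (n k : ℕ) : ℝ :=
  ((2 * n - k).choose (n - k) : ℝ) * (-2) ^ k * rchoose x k

noncomputable def certificate (n k : ℕ) : ℝ :=
  -k * ((2 * n + 1 - k).choose (n + 1 - k) : ℝ) * (-2) ^ k * rchoose x k

lemma succ_mul_term_succ {n k : ℕ} (hk : k ≤ n) :
    (n + 1) * term x (n + 1) k =
      (4 * n + 2 - 2 * x) * term x n k + (certificate x n (k + 1) - certificate x n k) := by
  obtain ⟨m, rfl⟩ := Nat.exists_eq_add_of_le hk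
  simp only [term, certificate]
  rw [show 2 * (k + m + 1) - k = k + 2 * m + 2 by omega, show k + m + 1 - k = m + 1 by omega,
    show 2 * (k + m) - k = k + 2 * m by omega, show k + m - k = m by omega,
    show 2 * (k + m) + 1 - (k + 1) = k + 2 * m by omega, show k + m + 1 - (k + 1) = m by omega,
    show 2 * (k + m) + 1 - k = k + 2 * m + 1 by omega, rchoose_succ]
  push_cast
  field_simp
  linear_combination (-2) ^ k * rchoose x k * choose_add_two_mul_recurrence k m

lemma succ_mul_sum_term_succ (n : ℕ) :
    (n + 1) * ∑ k ∈ range (n + 2), term x (n + 1) k =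
      (4 * n + 2 - 2 * x) * ∑ k ∈ range (n + 1), term x n k := by
  have htel : ∑ k ∈ range (n + 1), (n + 1) * term x (n + 1) k =
      (4 * n + 2 - 2 * x) * ∑ k ∈ range (n + 1), term x n k +
        (certificate x n (n + 1) - certificate x n 0) := by
    rw [sum_congr rfl fun k hk => succ_mul_term_succ x (Nat.lt_succ_iff.mp (mem_range.mp hk)),
      sum_add_distrib, ← mul_sum, sum_range_sub]
  have hlast : (n + 1) * term x (n + 1) (n + 1) = -certificate x n (n + 1) := by
    simp only [term, certificate, show 2 * (n + 1) - (n + 1) = n + 1 by omega,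
      show 2 * n + 1 - (n + 1) = n by omega, tsub_self, Nat.choose_zero_right, Nat.cast_one,
      one_mul, mul_one, Nat.cast_add]
    ring
  rw [sum_range_succ _ (n + 1), mul_add, mul_sum, htel, hlast]
  simp [certificate]

lemma succ_mul_four_pow_rchoose_succ (n : ℕ) :
    (n + 1) * (4 ^ (n + 1) * rchoose ((n + 1 : ℕ) - (x + 1) / 2) (n + 1)) =
      (4 * n + 2 - 2 * x) * (4 ^ n * rchoose (n - (x + 1) / 2) n) := by
  rw [show ((n + 1 : ℕ) : ℝ) - (x + 1) / 2 = n - (x + 1) / 2 + 1 by push_cast; ring, pow_succ,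
    mul_left_comm, mul_assoc, succ_mul_rchoose_add_one_succ]
  ring

end CentralChooseSum

/-- Hypergeometric identity:
`∑_{k=0}^{n} C(2n-k, n-k) (-2)^k binom(x,k) = 4^n binom(n - (x+1)/2, n)`. -/
theorem stmt14 (n : ℕ) (x : ℝ) :
    ∑ k ∈ Finset.range (n + 1),
        ((2 * n - k).choose (n - k) : ℝ) * (-2) ^ k * rchoose x k =
      4 ^ n * rchoose ((n : ℝ) - (x + 1) / 2) n := by
  have h := eq_of_succ_mul_eq (a := fun n => ∑ k ∈ range (n + 1), CentralChooseSum.term x n k)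
    (b := fun n : ℕ => 4 ^ n * rchoose ((n : ℝ) - (x + 1) / 2) n)
    (by simp [CentralChooseSum.term, rchoose_zero])
    (CentralChooseSum.succ_mul_sum_term_succ x) (CentralChooseSum.succ_mul_four_pow_rchoose_succ x)
  exact congrFun h n
end
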